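/- Let n > 3 be odd, define β_n^e(k;M) = R_n r_n [R_n(r_n² − 1)(cos(kθ_n) − 1) − sin(kθ_n)/tan((2M+1)θ_n)], and set M₀ = (n−1)/4 if n ≡ 1 (mod 4) and M₀ = (n−3)/4 if n ≡ 3 (mod 4). Then for every even integer k with 2 ≤ k ≤ (n−1)/2 and every M ∈ {0,…,(n−3)/2}: if n ≡ 1 (mod 4), then β_n^e(k;M) < 0 for M < M₀ and β_n^e(k;M) > 0 for M ≥ M₀; if n ≡ 3 (mod 4), then β_n^e(k;M) < 0 for M ≤ M₀ and β_n^e(k;M) > 0 for M > M₀. -/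

import Mathlib

/-!
Write `θ = π / n`. Since `R_n (r_n² - 1) = tan² (θ/2)` and `1 - cos kθ = sin kθ · tan (kθ/2)`,
`β_n^e(k;M) = -R_n r_n sin kθ · (tan² (θ/2) tan (kθ/2) + cot ((2M+1)θ))`.
If `(2M+1)θ < π/2`, i.e. `4M + 2 < n`, both summands are positive and `β < 0`.
Otherwise `cot ((2M+1)θ) = -cot b` with `b = π - (2M+1)θ`, and
`tan² (θ/2) tan (kθ/2) < tan (θ/2) ≤ cot b` since `θ/2 + kθ/2 < π/2` and `θ/2 + b ≤ π/2`;
the last inequality is `n ≤ 4M + 1`, so then `β > 0`.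
-/

noncomputable section

/-- The angle `θ_n = π / n`. -/
def thetaN (n : ℕ) : ℝ := Real.pi / n

/-- `r_n = (cos θ_n)^{-1/2}`. -/
def rN (n : ℕ) : ℝ := Real.sqrt (Real.cos (thetaN n))⁻¹

/-- `R_n = 1 / (1 + r_n²)`. -/
def RN (n : ℕ) : ℝ := 1 / (1 + rN n ^ 2)

/-- `β_n^e(k;M) = R_n r_n [R_n(r_n² − 1)(cos(kθ_n) − 1) − sin(kθ_n)/tan((2M+1)θ_n)]`. -/
def betaE (n k M : ℕ) : ℝ :=
  RN n * rN n * (RN n * (rN n ^ 2 - 1) * (Real.cos ((k : ℝ) * thetaN n) - 1)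
    - Real.sin ((k : ℝ) * thetaN n) / Real.tan ((2 * (M : ℝ) + 1) * thetaN n))

open Real

namespace Real

lemma cos_eq_two_mul_cos_half_sq_sub_one (x : ℝ) : cos x = 2 * cos (x / 2) ^ 2 - 1 := by
  rw [← cos_two_mul, mul_div_cancel₀ x two_ne_zero]

lemma tan_half_sq (x : ℝ) : tan (x / 2) ^ 2 = (1 - cos x) / (1 + cos x) := by
  have := sin_sq_add_cos_sq (x / 2)
  rw [tan_eq_sin_div_cos, div_pow, cos_eq_two_mul_cos_half_sq_sub_one x,
    show 1 - (2 * cos (x / 2) ^ 2 - 1) = 2 * sin (x / 2) ^ 2 by linarith,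
    show 1 + (2 * cos (x / 2) ^ 2 - 1) = 2 * cos (x / 2) ^ 2 by ring,
    mul_div_mul_left _ _ two_ne_zero]

lemma one_sub_cos_eq_sin_mul_tan_half {x : ℝ} (h : cos (x / 2) ≠ 0) :
    1 - cos x = sin x * tan (x / 2) := by
  have hs : sin x = 2 * sin (x / 2) * cos (x / 2) := by
    rw [← sin_two_mul, mul_div_cancel₀ x two_ne_zero]
  rw [cos_eq_two_mul_cos_half_sq_sub_one x, hs, tan_eq_sin_div_cos]
  field_simp
  nlinarith [sin_sq_add_cos_sq (x / 2)]

lemma tan_lt_inv_tan_of_add_lt {x y : ℝ} (hx : -(π / 2) < x) (hy : 0 < y)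
    (h : x + y < π / 2) : tan x < (tan y)⁻¹ := by
  rw [← tan_pi_div_two_sub]
  exact tan_lt_tan_of_lt_of_lt_pi_div_two hx (by linarith) (by linarith)

lemma tan_le_inv_tan_of_add_le {x y : ℝ} (hx : -(π / 2) < x) (hy : 0 < y)
    (h : x + y ≤ π / 2) : tan x ≤ (tan y)⁻¹ := by
  rw [← tan_pi_div_two_sub]
  exact strictMonoOn_tan.monotoneOn ⟨hx, by linarith⟩ ⟨by linarith, by linarith⟩
    (by linarith)

lemma tan_sq_mul_tan_lt_inv_tan {s a b : ℝ} (hs : 0 < s) (ha : 0 < a) (hb : 0 < b)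
    (hsa : s + a < π / 2) (hsb : s + b ≤ π / 2) : tan s ^ 2 * tan a < (tan b)⁻¹ := by
  have hts : 0 < tan s := tan_pos_of_pos_of_lt_pi_div_two hs (by linarith)
  have hsa' : tan s * tan a < 1 := by
    have := mul_lt_mul_of_pos_left
      (tan_lt_inv_tan_of_add_lt (by linarith) hs (by linarith : a + s < π / 2)) hts
    rwa [mul_inv_cancel₀ hts.ne'] at this
  calc tan s ^ 2 * tan a = tan s * (tan s * tan a) := by ring
    _ < tan s := mul_lt_of_lt_one_right hts hsa'
    _ ≤ (tan b)⁻¹ := tan_le_inv_tan_of_add_le (by linarith) hb hsb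

end Real

lemma thetaN_pos {n : ℕ} (hn : 0 < n) : 0 < thetaN n := by
  unfold thetaN; positivity

lemma natCast_mul_thetaN {n : ℕ} (hn : 0 < n) : (n : ℝ) * thetaN n = π := by
  unfold thetaN; field_simp

lemma cos_thetaN_pos {n : ℕ} (hn : 2 < n) : 0 < cos (thetaN n) := by
  have hn' : (2 : ℝ) < n := by exact_mod_cast hn
  have := natCast_mul_thetaN (n := n) (by omega)
  have := thetaN_pos (n := n) (by omega)
  exact cos_pos_of_mem_Ioo ⟨by linarith [pi_pos], by nlinarith⟩

lemma sin_natCast_mul_thetaN_pos {n k : ℕ} (hk : 0 < k) (hkn : k < n) :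
    0 < sin (k * thetaN n) := by
  have hk' : (0 : ℝ) < k := by exact_mod_cast hk
  have hkn' : (k : ℝ) < n := by exact_mod_cast hkn
  have := natCast_mul_thetaN (n := n) (by omega)
  have := thetaN_pos (n := n) (by omega)
  exact sin_pos_of_pos_of_lt_pi (by positivity) (by nlinarith)

lemma rN_sq {n : ℕ} (hn : 2 < n) : rN n ^ 2 = (cos (thetaN n))⁻¹ :=
  sq_sqrt (inv_nonneg.2 (cos_thetaN_pos hn).le)

lemma RN_mul_rN_pos {n : ℕ} (hn : 2 < n) : 0 < RN n * rN n := by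
  have : 0 < rN n := sqrt_pos.2 (inv_pos.2 (cos_thetaN_pos hn))
  unfold RN; positivity

lemma RN_mul_rN_sq_sub_one {n : ℕ} (hn : 2 < n) :
    RN n * (rN n ^ 2 - 1) = tan (thetaN n / 2) ^ 2 := by
  have hc := cos_thetaN_pos hn
  have hc1 : 1 + cos (thetaN n) ≠ 0 := by positivity
  rw [RN, rN_sq hn, tan_half_sq]
  field_simp
  ring

lemma betaE_eq {n k M : ℕ} (hn : 2 < n) (hkn : k < n) :
    betaE n k M = -(RN n * rN n * sin (k * thetaN n)) *
      (tan (thetaN n / 2) ^ 2 * tan (k * thetaN n / 2) + (tan ((2 * M + 1) * thetaN n))⁻¹) := by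
  have hk' : (k : ℝ) < n := by exact_mod_cast hkn
  have := natCast_mul_thetaN (n := n) (by omega)
  have := thetaN_pos (n := n) (by omega)
  have hcos : cos (k * thetaN n / 2) ≠ 0 :=
    (cos_pos_of_mem_Ioo ⟨by nlinarith [(k.cast_nonneg : (0 : ℝ) ≤ k)], by nlinarith⟩).ne'
  rw [betaE, RN_mul_rN_sq_sub_one hn]
  linear_combination (-(RN n * rN n * tan (thetaN n / 2) ^ 2)) *
    one_sub_cos_eq_sin_mul_tan_half hcos

lemma betaE_neg {n k M : ℕ} (hk : 0 < k) (hkn : k < n) (hMn : 4 * M + 2 < n) :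
    betaE n k M < 0 := by
  have hn : 2 < n := by omega
  have hk' : (k : ℝ) < n := by exact_mod_cast hkn
  have hMn' : 4 * (M : ℝ) + 2 < n := by exact_mod_cast hMn
  have hπ := natCast_mul_thetaN (n := n) (by omega)
  have hθ := thetaN_pos (n := n) (by omega)
  have ha : 0 ≤ tan (k * thetaN n / 2) :=
    tan_nonneg_of_nonneg_of_le_pi_div_two (by positivity) (by nlinarith)
  have hT : 0 < tan ((2 * M + 1) * thetaN n) :=
    tan_pos_of_pos_of_lt_pi_div_two (by positivity) (by nlinarith)
  rw [betaE_eq hn hkn, neg_mul]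
  exact neg_neg_of_pos <| mul_pos
    (mul_pos (RN_mul_rN_pos hn) (sin_natCast_mul_thetaN_pos hk hkn)) (by positivity)

lemma betaE_pos {n k M : ℕ} (hk : 0 < k) (hkn : k + 1 < n) (hMn : 2 * M + 1 < n)
    (hnM : n ≤ 4 * M + 1) : 0 < betaE n k M := by
  have hn : 2 < n := by omega
  have hk' : (k : ℝ) + 1 < n := by exact_mod_cast hkn
  have hMn' : 2 * (M : ℝ) + 1 < n := by exact_mod_cast hMn
  have hnM' : (n : ℝ) ≤ 4 * M + 1 := by exact_mod_cast hnM
  have hπ := natCast_mul_thetaN (n := n) (by omega)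
  have hθ := thetaN_pos (n := n) (by omega)
  have hkθ : 0 < (k : ℝ) * thetaN n := by positivity
  have key := tan_sq_mul_tan_lt_inv_tan (s := thetaN n / 2) (a := k * thetaN n / 2)
    (b := π - (2 * M + 1) * thetaN n) (by positivity) (by positivity) (by nlinarith)
    (by nlinarith) (by nlinarith)
  rw [betaE_eq hn (by omega), ← sub_sub_cancel π ((2 * (M : ℝ) + 1) * thetaN n), tan_pi_sub,
    inv_neg, ← sub_eq_add_neg]
  exact mul_pos_of_neg_of_neg
    (neg_neg_of_pos (mul_pos (RN_mul_rN_pos hn) (sin_natCast_mul_thetaN_pos hk (by omega))))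
    (sub_neg.2 key)

theorem betaE_sign_general (n : ℕ)
    (k : ℕ) (hk2 : 2 ≤ k) (hk : k ≤ (n - 1) / 2)
    (M : ℕ) (hM : M ≤ (n - 3) / 2) :
    (n % 4 = 1 →
      (M < (n - 1) / 4 → betaE n k M < 0) ∧ ((n - 1) / 4 ≤ M → 0 < betaE n k M)) ∧
    (n % 4 = 3 →
      (M ≤ (n - 3) / 4 → betaE n k M < 0) ∧ ((n - 3) / 4 < M → 0 < betaE n k M)) := by
  have hk0 : 0 < k := by omega
  have hkn : k + 1 < n := by omega
  refine ⟨fun hn4 => ⟨fun hM0 => ?_, fun hM0 => ?_⟩,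
    fun hn4 => ⟨fun hM0 => ?_, fun hM0 => ?_⟩⟩
  · exact betaE_neg hk0 (by omega) (by omega)
  · exact betaE_pos hk0 hkn (by omega) (by omega)
  · exact betaE_neg hk0 (by omega) (by omega)
  · exact betaE_pos hk0 hkn (by omega) (by omega)

/-- the sign of `β_n^e(k;M)` changes exactly at `M₀`, where
`M₀ = (n−1)/4` if `n ≡ 1 (mod 4)` and `M₀ = (n−3)/4` if `n ≡ 3 (mod 4)`. -/
theorem betaE_sign (n : ℕ) (hodd : Odd n) (hn : 3 < n)
    (k : ℕ) (hke : Even k) (hk2 : 2 ≤ k) (hk : k ≤ (n - 1) / 2)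
    (M : ℕ) (hM : M ≤ (n - 3) / 2) :
    (n % 4 = 1 →
      (M < (n - 1) / 4 → betaE n k M < 0) ∧ ((n - 1) / 4 ≤ M → 0 < betaE n k M)) ∧
    (n % 4 = 3 →
      (M ≤ (n - 3) / 4 → betaE n k M < 0) ∧ ((n - 3) / 4 < M → 0 < betaE n k M)) :=
  betaE_sign_general n k hk2 hk M hM
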